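/- arXiv:1508.06430 — 2 statements merged into one kernel-verified Lean document; each statement's English description precedes it below -/
import Mathlib

section
/- Intervals in a median graph are convex: for any vertices u, v of a median graph, the interval I(u,v) is a convex set of vertices. -/
/-!
Take `x, y ∈ I(u,v)` and `w ∈ I(x,y)`, and induct on `d(x,y)`. If `y ∉ I(u,w)`, the median `p`
of `u, w, y` differs from `y`, lies in `I(u,y) ⊆ I(u,v)`, and `w ∈ I(x,p)` with `d(x,p) < d(x,y)`,
so the induction hypothesis applies to `x, p`; the same works with `u, v` or `x, y` exchanged.
Otherwise `x` and `y` are both medians of `u, w, v`, hence equal, and then `w = x`.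
-/

/-- The interval between two vertices: all vertices lying on a shortest path,
i.e. `w` with `d(u,w) + d(w,v) = d(u,v)`. -/
def SimpleGraph.interval {V : Type*} (Γ : SimpleGraph V) (u v : V) : Set V :=
  {w | Γ.dist u w + Γ.dist w v = Γ.dist u v}

/-- A set of vertices is convex if it contains the interval between any two of its members. -/
def SimpleGraph.IsConvexSet {V : Type*} (Γ : SimpleGraph V) (X : Set V) : Prop :=
  ∀ u ∈ X, ∀ v ∈ X, Γ.interval u v ⊆ X

/-- A (connected) graph is median if every triple of vertices has a unique median vertex. -/
def SimpleGraph.IsMedian {V : Type*} (Γ : SimpleGraph V) : Prop :=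
  Γ.Connected ∧ ∀ x y z : V, ∃! m : V,
    m ∈ Γ.interval x y ∩ Γ.interval y z ∩ Γ.interval x z

namespace SimpleGraph

variable {V : Type*} {G : SimpleGraph V} {u v w x y p : V}

theorem mem_interval_iff : w ∈ G.interval u v ↔ G.dist u w + G.dist w v = G.dist u v :=
  Iff.rfl

theorem interval_comm (u v : V) : G.interval u v = G.interval v u := by
  ext w
  simp only [mem_interval_iff, dist_comm (u := v), dist_comm (u := w) (v := u), add_comm]

theorem Connected.eq_of_mem_interval_self (hG : G.Connected) (hw : w ∈ G.interval x x) :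
    w = x := by
  rw [mem_interval_iff, dist_self] at hw
  exact ((hG.dist_eq_zero_iff).mp (by omega : G.dist w x = 0))

theorem Connected.interval_subset_interval (hG : G.Connected) (hy : y ∈ G.interval u v) :
    G.interval u y ⊆ G.interval u v := by
  intro p hp
  rw [mem_interval_iff] at hy hp ⊢
  have := hG.dist_triangle (u := u) (v := p) (w := v)
  have := hG.dist_triangle (u := p) (v := y) (w := v)
  omega

theorem Connected.mem_interval_of_mem_interval (hG : G.Connected) (hw : w ∈ G.interval x y)
    (hp : p ∈ G.interval w y) : w ∈ G.interval x p := by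
  rw [mem_interval_iff] at hw hp ⊢
  have := hG.dist_triangle (u := x) (v := w) (w := p)
  have := hG.dist_triangle (u := x) (v := p) (w := y)
  omega

theorem Connected.dist_lt_of_mem_interval (hG : G.Connected) (hp : p ∈ G.interval x y)
    (hpy : p ≠ y) : G.dist x p < G.dist x y := by
  rw [mem_interval_iff] at hp
  have := hG.pos_dist_of_ne hpy
  omega

namespace IsMedian

theorem eq_of_mem_median (hG : G.IsMedian) {a b : V}
    (ha : a ∈ G.interval u w ∩ G.interval w v ∩ G.interval u v)
    (hb : b ∈ G.interval u w ∩ G.interval w v ∩ G.interval u v) : a = b :=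
  (hG.2 u w v).unique ha hb

theorem exists_mem_interval_dist_lt (hG : G.IsMedian) (hy : y ∈ G.interval u v)
    (hw : w ∈ G.interval x y) (hyw : y ∉ G.interval u w) :
    ∃ p ∈ G.interval u v, w ∈ G.interval x p ∧ G.dist x p < G.dist x y := by
  obtain ⟨p, ⟨⟨hpuw, hpwy⟩, hpuy⟩, -⟩ := hG.2 u w y
  have hpy : p ≠ y := by rintro rfl; exact hyw hpuw
  have hpxy : p ∈ G.interval x y := by
    rw [interval_comm] at hpwy hw ⊢
    exact hG.1.interval_subset_interval hw hpwy
  exact ⟨p, hG.1.interval_subset_interval hy hpuy, hG.1.mem_interval_of_mem_interval hw hpwy,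
    hG.1.dist_lt_of_mem_interval hpxy hpy⟩

theorem interval_subset_interval (hG : G.IsMedian) (hx : x ∈ G.interval u v)
    (hy : y ∈ G.interval u v) : G.interval x y ⊆ G.interval u v := by
  induction hn : G.dist x y using Nat.strong_induction_on generalizing x y with
  | _ n ih =>
  intro w hw
  have hw' : w ∈ G.interval y x := interval_comm x y ▸ hw
  have hvu : G.interval u v = G.interval v u := interval_comm u v
  by_cases hyu : y ∈ G.interval u w
  swap
  · obtain ⟨p, hp, hwp, hlt⟩ := hG.exists_mem_interval_dist_lt hy hw hyu
    exact ih _ (hn ▸ hlt) hx hp rfl hwp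
  by_cases hyv : y ∈ G.interval v w
  swap
  · obtain ⟨p, hp, hwp, hlt⟩ := hG.exists_mem_interval_dist_lt (hvu ▸ hy) hw hyv
    exact ih _ (hn ▸ hlt) hx (hvu ▸ hp) rfl hwp
  by_cases hxu : x ∈ G.interval u w
  swap
  · obtain ⟨p, hp, hwp, hlt⟩ := hG.exists_mem_interval_dist_lt hx hw' hxu
    exact ih _ (hn ▸ dist_comm (u := x) ▸ hlt) hy hp rfl hwp
  by_cases hxv : x ∈ G.interval v w
  swap
  · obtain ⟨p, hp, hwp, hlt⟩ := hG.exists_mem_interval_dist_lt (hvu ▸ hx) hw' hxv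
    exact ih _ (hn ▸ dist_comm (u := x) ▸ hlt) hy (hvu ▸ hp) rfl hwp
  have hxy : x = y := hG.eq_of_mem_median
    ⟨⟨hxu, interval_comm v w ▸ hxv⟩, hx⟩ ⟨⟨hyu, interval_comm v w ▸ hyv⟩, hy⟩
  subst hxy
  rwa [hG.1.eq_of_mem_interval_self hw]

end IsMedian

end SimpleGraph

/-- Intervals in a median graph are convex. -/
theorem interval_isConvex {V : Type*} (Γ : SimpleGraph V) (hΓ : Γ.IsMedian) (u v : V) :
    Γ.IsConvexSet (Γ.interval u v) :=
  fun _ hx _ hy => hΓ.interval_subset_interval hx hy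
end

section
/- For n ≥ 3, Aut(F_n) is generated by the four elements ρ₁₂, e₁, the transposition (x₁,x₂), and the cycle (x₁,x₂,…,x_n) (the automorphism permuting the basis cyclically). -/
/-!
Nielsen's reduction. For an automorphism `φ` of `F(α)` write `u t = φ (mk [t])` for the images of
the signed letters `t`, and weigh a word first by its length and then by a lexicographic code of
its two halves. If some `u t * u s` with `t.1 ≠ s.1` weighs less than `u t`, an elementary Nielsen
move lowers the total weight of `φ`. Otherwise each `u t` cancels at most half of itself against a
neighbour, and never exactly half on both sides, since that configuration always allows a
lexicographic improvement. So in every reduced product of the `u t` each factor keeps an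
uncancelled letter, `φ` does not shorten reduced words, and `φ⁻¹` maps each generator to a
generator or its inverse. By well-founded induction on the weight, `Aut(F(α))` is generated by
the permutations of the basis, the inversions of one generator and the transvections
`x_i ↦ x_i x_j`. For `α = Fin n` these are conjugates of `e₁` and `ρ₁₂` by permutations, and the
permutations are generated by `(x₁,x₂)` and the `n`-cycle.
-/

namespace FreeGroup

section Letters

variable {α : Type*}

theorem self_ne_inv_letter (t : α × Bool) : t ≠ (t.1, !t.2) := fun h => by
  simpa using congrArg Prod.snd h

theorem eq_of_fst_eq_of_ne_inv_letter {t s : α × Bool} (h : s ≠ (t.1, !t.2)) (h1 : t.1 = s.1) :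
    t = s := by
  obtain ⟨i, b⟩ := t
  obtain ⟨j, d⟩ := s
  cases h1
  cases b <;> cases d <;> simp_all

theorem mk_inv_letter (t : α × Bool) : mk [(t.1, !t.2)] = (mk [t])⁻¹ := by
  simp [inv_mk, invRev]

@[simp]
theorem mk_singleton_true (a : α) : mk [(a, true)] = of a := rfl

@[simp]
theorem mk_singleton_false (a : α) : mk [(a, false)] = (of a)⁻¹ := mk_inv_letter (a, true)

theorem mk_singleton_ne_one (t : α × Bool) : mk [t] ≠ 1 := by
  obtain ⟨a, _ | _⟩ := t <;> simp [of_ne_one]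

theorem invRev_prefix_invRev_of_suffix {l₁ l₂ : List (α × Bool)} (h : l₁ <:+ l₂) :
    invRev l₁ <+: invRev l₂ := by
  obtain ⟨r, rfl⟩ := h
  simp [invRev_append]

theorem mulAut_ext {φ ψ : MulAut (FreeGroup α)} (h : ∀ a, φ (of a) = ψ (of a)) : φ = ψ :=
  MulEquiv.toMonoidHom_injective (ext_hom _ _ h)

end Letters

section Cancellation

variable {α : Type*} [DecidableEq α]

theorem exists_reduce_append {u v : List (α × Bool)} (hu : IsReduced u) (hv : IsReduced v) :
    ∃ a c b, u = a ++ c ∧ v = invRev c ++ b ∧ reduce (u ++ v) = a ++ b := by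
  induction u using List.reverseRecOn generalizing v with
  | nil => exact ⟨[], [], v, rfl, rfl, hv.reduce_eq⟩
  | append_singleton u p ih =>
    cases v with
    | nil => exact ⟨u ++ [p], [], [], by simp, rfl, by simpa using hu.reduce_eq⟩
    | cons q v =>
      by_cases hq : q = (p.1, !p.2)
      · subst hq
        obtain ⟨a, c, b, rfl, rfl, h⟩ :=
          ih (v := v) (hu.infix ⟨[], [p], rfl⟩) (hv.infix ⟨[(p.1, !p.2)], [], by simp⟩)
        refine ⟨a, c ++ [p], b, by simp, by simp [invRev], ?_⟩
        rw [← h, ← reduce.Step.eq (Red.Step.not (L₁ := a ++ c) (L₂ := invRev c ++ b) (x := p.1)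
          (b := p.2))]
        simp
      · refine ⟨u ++ [p], [], q :: v, by simp, rfl, IsReduced.reduce_eq ?_⟩
        refine hu.append_overlap (L₂ := [p]) (isReduced_cons_cons.2 ⟨fun h => ?_, hv⟩)
          (List.cons_ne_nil _ _)
        by_contra h'
        exact hq (Prod.ext h.symm (Bool.eq_not_of_ne (Ne.symm h')))

def cancelLen (x y : FreeGroup α) : ℕ := (norm x + norm y - norm (x * y)) / 2

theorem exists_toWord_mul (x y : FreeGroup α) :
    ∃ a c b, x.toWord = a ++ c ∧ y.toWord = invRev c ++ b ∧ (x * y).toWord = a ++ b ∧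
      c.length = cancelLen x y := by
  obtain ⟨a, c, b, hx, hy, hxy⟩ := exists_reduce_append (isReduced_toWord (x := x))
    (isReduced_toWord (x := y))
  have hxy' : (x * y).toWord = a ++ b := by rw [toWord_mul, hxy]
  refine ⟨a, c, b, hx, hy, hxy', ?_⟩
  simp only [cancelLen, norm, hx, hy, hxy', List.length_append, invRev_length]
  omega

theorem norm_mul_add_two_mul_cancelLen (x y : FreeGroup α) :
    norm (x * y) + 2 * cancelLen x y = norm x + norm y := by
  obtain ⟨a, c, b, hx, hy, hxy, hc⟩ := exists_toWord_mul x y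
  simp only [norm, hx, hy, hxy, ← hc, List.length_append, invRev_length]
  omega

theorem length_le_cancelLen {x y : FreeGroup α} {s : List (α × Bool)} (hx : s <:+ x.toWord)
    (hy : invRev s <+: y.toWord) : s.length ≤ cancelLen x y := by
  obtain ⟨a, c, b, hxw, hyw, hxy, hc⟩ := exists_toWord_mul x y
  rw [← hc]
  by_contra! hlt
  obtain ⟨s', rfl⟩ := List.suffix_of_suffix_length_le (hxw ▸ List.suffix_append a c) hx hlt.le
  obtain ⟨s', z, rfl⟩ := (List.eq_nil_or_concat s').resolve_left (by rintro rfl; simp at hlt)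
  rw [List.concat_eq_append] at hx hy
  obtain ⟨a', rfl⟩ : s' ++ [z] <:+ a := List.suffix_append_self_iff.1 (hxw ▸ hx)
  obtain ⟨b', rfl⟩ : invRev (s' ++ [z]) <+: b := by
    rw [hyw, invRev_append] at hy
    exact (List.prefix_append_right_inj _).1 hy
  have hred : IsReduced ((a' ++ s') ++ (z.1, z.2) :: (z.1, !z.2) :: (invRev s' ++ b')) := by
    simpa [hxy, invRev_append, invRev] using isReduced_toWord (x := x * y)
  exact hred.not_step Red.Step.not

theorem two_mul_cancelLen_self_lt {x : FreeGroup α} (hx : x ≠ 1) :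
    2 * cancelLen x x < norm x := by
  -- otherwise `x` and `x⁻¹` have the same reduced word, impossible in a torsion-free group
  obtain ⟨a, c, b, hxa, hxb, -, hc⟩ := exists_toWord_mul x x
  by_contra! hle
  have hab : a.length = b.length := by
    have := congrArg List.length (hxa.symm.trans hxb)
    simp only [List.length_append, invRev_length] at this
    omega
  obtain ⟨r, hr⟩ : a <+: invRev c :=
    List.prefix_of_prefix_length_le (hxa ▸ List.prefix_append a c)
      (hxb ▸ List.prefix_append _ b)
      (by simp only [norm, hxa, List.length_append] at hle; simp only [invRev_length]; omega)
  have hc' : c = invRev r ++ invRev a := by rw [← invRev_append, hr, invRev_invRev]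
  have hba : invRev a = b := by
    have h := hxa.symm.trans hxb
    rw [← hr, hc', List.append_assoc, List.append_cancel_left_eq] at h
    exact (List.append_inj' h (by rw [invRev_length, hab])).2
  apply hx
  rw [← inv_eq_self, ← toWord_inj, toWord_inv, hxa, invRev_append, hba, ← hxb, hxa]

end Cancellation

section NielsenReduced

variable {α β : Type*} [DecidableEq β]

/-- Condition (N2) of Nielsen's method (Lyndon–Schupp, §I.2), for the images of the signed
letters. -/
def IsNielsenReduced (f : FreeGroup α →* FreeGroup β) : Prop :=
  ∀ t₁ t₂ t₃ : α × Bool, t₂ ≠ (t₁.1, !t₁.2) → t₃ ≠ (t₂.1, !t₂.2) →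
    cancelLen (f (mk [t₁])) (f (mk [t₂])) + cancelLen (f (mk [t₂])) (f (mk [t₃])) <
      norm (f (mk [t₂]))

namespace IsNielsenReduced

variable {f : FreeGroup α →* FreeGroup β}

theorem cancelLen_le_cancelLen_of_suffix (hf : IsNielsenReduced f) {x : FreeGroup β}
    {s t' t : α × Bool} (hs : t' ≠ (s.1, !s.2)) (ht : t ≠ (t'.1, !t'.2))
    (hx : (f (mk [t'])).toWord.drop (cancelLen (f (mk [s])) (f (mk [t']))) <:+ x.toWord) :
    cancelLen x (f (mk [t])) ≤ cancelLen (f (mk [t'])) (f (mk [t])) := by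
  obtain ⟨a, c, b, hxw, htw, -, hc⟩ := exists_toWord_mul x (f (mk [t]))
  have hN2 := hf s t' t hs ht
  rw [← hc]
  rcases List.suffix_or_suffix_of_suffix (hxw ▸ List.suffix_append a c) hx with hcD | hDc
  · exact length_le_cancelLen (hcD.trans (List.drop_suffix _ _)) (htw ▸ List.prefix_append _ b)
  · have hD := length_le_cancelLen (List.drop_suffix _ _)
      (htw ▸ (invRev_prefix_invRev_of_suffix hDc).trans (List.prefix_append _ b))
    simp only [List.length_drop, norm] at hD hN2
    omega

/-- In the image of a reduced word ending in `t`, the factor `f (mk [t])` survives except for what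
a single left neighbour can cancel, and the image is long enough to absorb a right neighbour. -/
theorem drop_suffix_and_length_le (hf : IsNielsenReduced f) (w : List (α × Bool)) :
    ∀ t : α × Bool, IsReduced (w ++ [t]) →
      (∃ s, t ≠ (s.1, !s.2) ∧ (f (mk [t])).toWord.drop (cancelLen (f (mk [s])) (f (mk [t])))
        <:+ (f (mk (w ++ [t]))).toWord) ∧
      ∀ s, s ≠ (t.1, !t.2) →
        w.length + 1 + cancelLen (f (mk [t])) (f (mk [s])) ≤ norm (f (mk (w ++ [t]))) := by
  induction w using List.reverseRecOn with
  | nil =>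
    intro t _
    refine ⟨⟨t, self_ne_inv_letter t, List.drop_suffix _ _⟩, fun s hs => ?_⟩
    have := hf t t s (self_ne_inv_letter t) hs
    simp only [List.nil_append, List.length_nil]
    omega
  | append_singleton w t' ih =>
    intro t hw
    obtain ⟨⟨s', hs', hsuf⟩, hlen⟩ := ih t' (hw.infix ⟨[], [t], rfl⟩)
    have htt' : t ≠ (t'.1, !t'.2) := by
      rintro rfl
      exact hw.not_step (by simpa using Red.Step.not (L₁ := w) (L₂ := []) (x := t'.1) (b := t'.2))
    have hmul : f (mk (w ++ [t'] ++ [t])) = f (mk (w ++ [t'])) * f (mk [t]) := by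
      rw [← mul_mk, MonoidHom.map_mul]
    obtain ⟨a, c, b, hxw, htw, hxtw, hc⟩ := exists_toWord_mul (f (mk (w ++ [t']))) (f (mk [t]))
    have hc_le := hc ▸ hf.cancelLen_le_cancelLen_of_suffix hs' htt' hsuf
    rw [hmul]
    refine ⟨⟨t', htt', ?_⟩, fun s hs => ?_⟩
    · have hb : (f (mk [t])).toWord.drop c.length = b := by
        rw [htw, ← invRev_length, List.drop_left]
      rw [hxtw, ← Nat.add_sub_cancel' hc_le, ← List.drop_drop, hb]
      exact (List.drop_suffix _ _).trans (List.suffix_append a b)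
    · have h₁ := hlen t htt'
      have h₂ := hf t' t s htt' hs
      simp only [norm, hxw, htw, hxtw, List.length_append, invRev_length,
        List.length_singleton] at h₁ h₂ ⊢
      omega

theorem norm_le_norm_map [DecidableEq α] (hf : IsNielsenReduced f) (z : FreeGroup α) :
    norm z ≤ norm (f z) := by
  rcases List.eq_nil_or_concat z.toWord with hz | ⟨w, t, hz⟩
  · simp [norm, hz]
  · rw [List.concat_eq_append] at hz
    have := (hf.drop_suffix_and_length_le w t (by rw [← hz]; exact isReduced_toWord)).2 t
      (self_ne_inv_letter t)
    rw [← hz, mk_toWord] at this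
    simp only [norm, hz, List.length_append, List.length_singleton] at this ⊢
    omega

theorem exists_symm_apply_of_eq_mk_singleton [DecidableEq α] {φ : FreeGroup α ≃* FreeGroup β}
    (hφ : IsNielsenReduced φ.toMonoidHom) (i : β) : ∃ t, φ.symm (of i) = mk [t] := by
  set z := φ.symm (of i)
  have hle : norm z ≤ 1 := by simpa [z] using hφ.norm_le_norm_map z
  have hz : z ≠ 1 := by simp [z]
  obtain ⟨t, ht⟩ := List.length_eq_one_iff.1 (le_antisymm hle
    (Nat.one_le_iff_ne_zero.2 (mt norm_eq_zero.1 hz)))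
  exact ⟨t, by rw [← ht, mk_toWord]⟩

end IsNielsenReduced

end NielsenReduced

section Weight

variable {γ : Type*} [Fintype γ]

/-- A big-endian numeral, so that on words of equal length comparing codes is a lexicographic
comparison; the base exceeds every digit and is at least `2`. -/
noncomputable def wordCode (w : List (γ × Bool)) : ℕ :=
  Nat.ofDigits (Fintype.card (γ × Bool) + 2) (w.reverse.map fun t => Fintype.equivFin _ t)

theorem wordCode_append (p z : List (γ × Bool)) :
    wordCode (p ++ z) = wordCode z + (Fintype.card (γ × Bool) + 2) ^ z.length * wordCode p := by
  simp [wordCode, Nat.ofDigits_append]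

theorem wordCode_append_lt_wordCode_append {p q : List (γ × Bool)} (z : List (γ × Bool))
    (h : wordCode p < wordCode q) : wordCode (p ++ z) < wordCode (q ++ z) := by
  rw [wordCode_append, wordCode_append]
  gcongr

theorem eq_of_wordCode_eq {p q : List (γ × Bool)} (hl : p.length = q.length)
    (h : wordCode p = wordCode q) : p = q := by
  have hdig : ∀ w : List (γ × Bool), ∀ d ∈ w.reverse.map fun t => (Fintype.equivFin _ t : ℕ),
      d < Fintype.card (γ × Bool) + 2 := by
    intro w d hd
    obtain ⟨t, -, rfl⟩ := List.mem_map.1 hd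
    omega
  have := Nat.ofDigits_inj_of_len_eq (by omega) (by simpa using hl) (hdig p) (hdig q) h
  simpa using List.map_injective_iff.2 (fun a b h => (Fintype.equivFin _).injective (Fin.ext h)) this

variable [DecidableEq γ]

noncomputable def halfCode (x : FreeGroup γ) : ℕ :=
  wordCode (x.toWord.take (norm x / 2)) + wordCode (x⁻¹.toWord.take (norm x / 2))

noncomputable def weight (x : FreeGroup γ) : ℕ ×ₗ ℕ := toLex (norm x, halfCode x)

theorem weight_inv (x : FreeGroup γ) : weight x⁻¹ = weight x := by
  simp only [weight, halfCode, norm_inv_eq, inv_inv, add_comm]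

theorem weight_lt_of_toWord_eq {x x' : FreeGroup γ} {a c d : List (γ × Bool)}
    (hx : x.toWord = a ++ c) (hx' : x'.toWord = a ++ d) (hcd : c.length = d.length)
    (hc : 2 * c.length ≤ norm x) (hlt : wordCode (invRev d) < wordCode (invRev c)) :
    weight x' < weight x := by
  have hnorm : norm x' = norm x := by simp [norm, hx, hx', hcd]
  have hc' : c.length ≤ norm x / 2 := by omega
  have ha : norm x / 2 ≤ a.length := by
    simp only [norm, hx, List.length_append] at hc ⊢
    omega
  refine Prod.Lex.toLex_lt_toLex.2 (Or.inr ⟨hnorm, ?_⟩)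
  simp only [halfCode, hnorm, toWord_inv, hx, hx', invRev_append,
    List.take_append_of_le_length ha]
  rw [List.take_append, List.take_append,
    List.take_of_length_le (l := invRev d) (by rw [invRev_length]; omega),
    List.take_of_length_le (l := invRev c) (by rw [invRev_length]; omega), invRev_length,
    invRev_length, ← hcd]
  exact Nat.add_lt_add_left (wordCode_append_lt_wordCode_append _ hlt) _

theorem weight_mul_lt_or_weight_mul_lt {x y z : FreeGroup γ} (hy : y ≠ 1)
    (hxy : 2 * cancelLen x y = norm y) (hyz : 2 * cancelLen y z = norm y)
    (hx : 2 * cancelLen x y ≤ norm x) (hz : 2 * cancelLen y z ≤ norm z) :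
    weight (x * y) < weight x ∨ weight (y * z) < weight z := by
  -- `y = p⁻¹ q` with `p` cancelling against `x` and `q` against `z`; comparing the codes of `p⁻¹`
  -- and `q⁻¹` decides whether `x * y` improves on `x` or `y * z` on `z`.
  obtain ⟨a, p, q, hxw, hyw, hxyw, hp⟩ := exists_toWord_mul x y
  obtain ⟨p', q', b, hyw', hzw, hyzw, hq'⟩ := exists_toWord_mul y z
  have hlen : norm y = p.length + q.length := by simp [norm, hyw]
  have hlen' : norm y = p'.length + q'.length := by simp [norm, hyw']
  obtain ⟨rfl, rfl⟩ := List.append_inj (hyw.symm.trans hyw') (by rw [invRev_length]; omega)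
  have hpq : p.length = q.length := by omega
  have hne : invRev q ≠ invRev p := by
    intro h
    rw [invRev_injective h] at hyw
    exact hy (toWord_eq_nil_iff.1 (by rw [← reduce_toWord, hyw, reduce_invRev_left_cancel]))
  rcases Nat.lt_or_gt_of_ne (mt (eq_of_wordCode_eq (by simp [hpq])) hne) with h | h
  · exact Or.inl (weight_lt_of_toWord_eq hxw hxyw hpq (hp ▸ hx) h)
  · right
    rw [← weight_inv, ← weight_inv z, mul_inv_rev]
    refine weight_lt_of_toWord_eq (a := invRev b) ?_ ?_ hpq.symm (by rwa [norm_inv_eq, hq']) h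
    · rw [toWord_inv, hzw, invRev_append, invRev_invRev]
    · rw [← mul_inv_rev, toWord_inv, hyzw, invRev_append, invRev_invRev]

end Weight

section Reduction

variable {α γ : Type*} [DecidableEq γ] {f : FreeGroup α →* FreeGroup γ}

theorem two_mul_cancelLen_le_of_norm_le_norm_mul (hf : Function.Injective f)
    (hN1 : ∀ t s : α × Bool, t.1 ≠ s.1 → norm (f (mk [t])) ≤ norm (f (mk [t]) * f (mk [s])))
    {t s : α × Bool} (hts : s ≠ (t.1, !t.2)) :
    2 * cancelLen (f (mk [t])) (f (mk [s])) ≤ norm (f (mk [t])) ∧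
      2 * cancelLen (f (mk [t])) (f (mk [s])) ≤ norm (f (mk [s])) := by
  by_cases h : t.1 = s.1
  · obtain rfl := eq_of_fst_eq_of_ne_inv_letter hts h
    have := two_mul_cancelLen_self_lt ((map_ne_one_iff f hf).2 (mk_singleton_ne_one t))
    omega
  · have h₁ := hN1 t s h
    have h₂ := hN1 (s.1, !s.2) (t.1, !t.2) (Ne.symm h)
    rw [mk_inv_letter, mk_inv_letter, _root_.map_inv, _root_.map_inv, ← mul_inv_rev, norm_inv_eq,
      norm_inv_eq] at h₂
    have := norm_mul_add_two_mul_cancelLen (f (mk [t])) (f (mk [s]))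
    omega

theorem exists_weight_mul_lt_of_not_isNielsenReduced [Fintype γ] (hf : Function.Injective f)
    (h : ¬ IsNielsenReduced f) :
    ∃ t s : α × Bool, t.1 ≠ s.1 ∧ weight (f (mk [t]) * f (mk [s])) < weight (f (mk [t])) := by
  by_contra! hmin
  have hN1 : ∀ t s : α × Bool, t.1 ≠ s.1 → norm (f (mk [t])) ≤ norm (f (mk [t]) * f (mk [s])) :=
    fun t s hts => by
      rcases Prod.Lex.toLex_le_toLex.1 (hmin t s hts) with h | h
      exacts [h.le, h.1.le]
  refine h fun t₁ t₂ t₃ h₁₂ h₂₃ => ?_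
  by_contra! hge
  obtain ⟨h₁₂', h₁₂''⟩ := two_mul_cancelLen_le_of_norm_le_norm_mul hf hN1 h₁₂
  obtain ⟨h₂₃', h₂₃''⟩ := two_mul_cancelLen_le_of_norm_le_norm_mul hf hN1 h₂₃
  have hne : f (mk [t₂]) ≠ 1 := (map_ne_one_iff f hf).2 (mk_singleton_ne_one t₂)
  have hself := two_mul_cancelLen_self_lt hne
  have ht₁₂ : t₁.1 ≠ t₂.1 := fun h => by
    obtain rfl := eq_of_fst_eq_of_ne_inv_letter h₁₂ h
    omega
  have ht₂₃ : t₂.1 ≠ t₃.1 := fun h => by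
    obtain rfl := eq_of_fst_eq_of_ne_inv_letter h₂₃ h
    omega
  rcases weight_mul_lt_or_weight_mul_lt hne (by omega) (by omega) h₁₂' h₂₃'' with hlt | hlt
  · exact (hmin t₁ t₂ ht₁₂).not_gt hlt
  · have := hmin (t₃.1, !t₃.2) (t₂.1, !t₂.2) (Ne.symm ht₂₃)
    rw [mk_inv_letter, mk_inv_letter, _root_.map_inv, _root_.map_inv, ← mul_inv_rev, weight_inv,
      weight_inv] at this
    exact this.not_gt hlt

end Reduction

section Generation

variable {α : Type*} [DecidableEq α] {N : Subgroup (MulAut (FreeGroup α))}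

theorem exists_mem_apply_mk_singleton_eq_mul
    (hinv : ∀ i, ∃ E ∈ N, ∀ k, E (of k) = Function.update of i (of i)⁻¹ k)
    (hmul : ∀ i j, i ≠ j → ∃ R ∈ N, ∀ k, R (of k) = Function.update of i (of i * of j) k)
    {t s : α × Bool} (hts : t.1 ≠ s.1) :
    ∃ m ∈ N, m (mk [t]) = mk [t] * mk [s] ∧ ∀ k ≠ t.1, m (of k) = of k := by
  obtain ⟨i, b⟩ := t
  obtain ⟨j, d⟩ := s
  obtain ⟨R, hRN, hR⟩ := hmul i j hts
  obtain ⟨Ei, hEiN, hEi⟩ := hinv i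
  obtain ⟨Ej, hEjN, hEj⟩ := hinv j
  have hji : j ≠ i := Ne.symm hts
  -- conjugating by the inversion of `x i` (of `x j`) flips the sign of `t` (of `s`)
  cases b <;> cases d
  · refine ⟨Ei * Ej * R * Ej * Ei, ?_, ?_, fun k hk => ?_⟩
    · exact N.mul_mem (N.mul_mem (N.mul_mem (N.mul_mem hEiN hEjN) hRN) hEjN) hEiN
    · simp [hEi, hEj, hR, hts, hji]
    · by_cases hkj : k = j <;> simp [hEi, hEj, hR, hk, hkj, hji]
  · refine ⟨Ei * R * Ei, N.mul_mem (N.mul_mem hEiN hRN) hEiN, ?_, fun k hk => ?_⟩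
    · simp [hEi, hR, hji]
    · simp [hEi, hR, hk]
  · refine ⟨Ej * R * Ej, N.mul_mem (N.mul_mem hEjN hRN) hEjN, ?_, fun k hk => ?_⟩
    · simp [hEj, hR, hts]
    · by_cases hkj : k = j <;> simp [hEj, hR, hk, hkj, hji]
  · exact ⟨R, hRN, by simp [hR], fun k hk => by simp [hR, hk]⟩

theorem exists_mem_apply_of_eq_mk_singleton [Fintype α]
    (hinv : ∀ i, ∃ E ∈ N, ∀ k, E (of k) = Function.update of i (of i)⁻¹ k) (b : α → Bool) :
    ∃ E ∈ N, ∀ k, E (of k) = mk [(k, b k)] := by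
  suffices h : ∀ S : Finset α, ∃ E ∈ N, ∀ k, E (of k) = if k ∈ S then (of k)⁻¹ else of k by
    obtain ⟨E, hEN, hE⟩ := h (Finset.univ.filter fun k => b k = false)
    exact ⟨E, hEN, fun k => by cases hk : b k <;> simp [hE, hk]⟩
  intro S
  induction S using Finset.induction_on with
  | empty => exact ⟨1, N.one_mem, fun k => by simp⟩
  | insert a S ha ih =>
    obtain ⟨E, hEN, hE⟩ := ih
    obtain ⟨Ea, hEaN, hEa⟩ := hinv a
    refine ⟨Ea * E, N.mul_mem hEaN hEN, fun k => ?_⟩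
    by_cases hka : k = a
    · subst hka
      simp [hE, hEa, ha]
    · by_cases hk : k ∈ S <;> simp [hE, hEa, hka, hk]

theorem mem_of_forall_apply_of_eq_mk_singleton [Fintype α]
    (hperm : ∀ π : Equiv.Perm α, freeGroupCongr π ∈ N)
    (hinv : ∀ i, ∃ E ∈ N, ∀ k, E (of k) = Function.update of i (of i)⁻¹ k)
    {ψ : MulAut (FreeGroup α)} (hψ : ∀ i, ∃ t, ψ (of i) = mk [t]) : ψ ∈ N := by
  choose t ht using hψ
  have hinj : Function.Injective fun i => (t i).1 := by
    intro i j hij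
    by_cases hflip : t j = ((t i).1, !(t i).2)
    · have h := ht j
      rw [hflip, mk_inv_letter, ← ht i, ← _root_.map_inv] at h
      simpa [invRev] using congrArg toWord (ψ.injective h)
    · exact of_injective (ψ.injective (by rw [ht, ht, eq_of_fst_eq_of_ne_inv_letter hflip hij]))
  obtain ⟨E, hEN, hE⟩ := exists_mem_apply_of_eq_mk_singleton hinv fun i => (t i).2
  convert N.mul_mem (hperm (Equiv.ofBijective _ (Finite.injective_iff_bijective.1 hinj))) hEN
  refine mulAut_ext fun i => ?_
  simp [ht, hE, freeGroupCongr_apply, map.mk]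

theorem weight_apply_of_fst [Fintype α] (φ : MulAut (FreeGroup α)) (t : α × Bool) :
    weight (φ (of t.1)) = weight (φ (mk [t])) := by
  obtain ⟨a, _ | _⟩ := t <;> simp [weight_inv]

noncomputable def totalWeight [Fintype α] (φ : MulAut (FreeGroup α)) : ℕ ×ₗ ℕ :=
  ∑ i, weight (φ (of i))

theorem totalWeight_mul_lt [Fintype α] {φ m : MulAut (FreeGroup α)} {t s : α × Bool}
    (hm : m (mk [t]) = mk [t] * mk [s]) (hfix : ∀ k ≠ t.1, m (of k) = of k)
    (hlt : weight (φ (mk [t]) * φ (mk [s])) < weight (φ (mk [t]))) :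
    totalWeight (φ * m) < totalWeight φ := by
  have hlt' : weight ((φ * m) (of t.1)) < weight (φ (of t.1)) := by
    rwa [weight_apply_of_fst, weight_apply_of_fst, MulAut.mul_apply, hm, _root_.map_mul]
  refine Finset.sum_lt_sum (fun k _ => ?_) ⟨t.1, Finset.mem_univ _, hlt'⟩
  by_cases hk : k = t.1
  · exact hk ▸ hlt'.le
  · rw [MulAut.mul_apply, hfix k hk]

theorem eq_top_of_perm_inversion_transvection_mem [Fintype α]
    (hperm : ∀ π : Equiv.Perm α, freeGroupCongr π ∈ N)
    (hinv : ∀ i, ∃ E ∈ N, ∀ k, E (of k) = Function.update of i (of i)⁻¹ k)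
    (hmul : ∀ i j, i ≠ j → ∃ R ∈ N, ∀ k, R (of k) = Function.update of i (of i * of j) k) :
    N = ⊤ := by
  refine eq_top_iff.2 fun φ _ =>
    (InvImage.wf totalWeight wellFounded_lt).induction φ fun φ ih => ?_
  by_cases hφ : IsNielsenReduced φ.toMonoidHom
  · exact N.inv_mem_iff.1 (mem_of_forall_apply_of_eq_mk_singleton hperm hinv
      hφ.exists_symm_apply_of_eq_mk_singleton)
  · obtain ⟨t, s, hts, hlt⟩ := exists_weight_mul_lt_of_not_isNielsenReduced φ.injective hφ
    obtain ⟨m, hmN, hm, hfix⟩ := exists_mem_apply_mk_singleton_eq_mul hinv hmul hts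
    simpa using N.mul_mem (ih (φ * m) (totalWeight_mul_lt hm hfix hlt)) (N.inv_mem hmN)

end Generation

section Permutations

variable {α : Type*}

def freeGroupCongrHom : Equiv.Perm α →* MulAut (FreeGroup α) where
  toFun π := freeGroupCongr π
  map_one' := mulAut_ext fun _ => rfl
  map_mul' _ _ := mulAut_ext fun _ => rfl

theorem exists_mem_apply_of_eq_update_map [DecidableEq α] {N : Subgroup (MulAut (FreeGroup α))}
    (hperm : ∀ π : Equiv.Perm α, freeGroupCongr π ∈ N) {ψ : MulAut (FreeGroup α)} (hψN : ψ ∈ N)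
    {i : α} {w : FreeGroup α} (hψ : ∀ k, ψ (of k) = Function.update of i w k)
    (π : Equiv.Perm α) : ∃ ψ' ∈ N, ∀ k, ψ' (of k) = Function.update of (π i) (map π w) k := by
  refine ⟨freeGroupCongr π * ψ * (freeGroupCongr π)⁻¹,
    N.mul_mem (N.mul_mem (hperm π) hψN) (N.inv_mem (hperm π)), fun k => ?_⟩
  by_cases hk : k = π i
  · simp [MulAut.inv_apply, freeGroupCongr_apply, hψ, hk]
  · have : π.symm k ≠ i := fun h => hk (by rw [← h, Equiv.apply_symm_apply])
    simp [MulAut.inv_apply, freeGroupCongr_apply, hψ, hk, this]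

theorem freeGroupCongr_mem_closure_finRotate_swap {n : ℕ} (π : Equiv.Perm (Fin (n + 2))) :
    freeGroupCongr π ∈
      Subgroup.closure {freeGroupCongr (finRotate (n + 2)), freeGroupCongr (Equiv.swap 0 1)} := by
  have hπ : π ∈ Subgroup.closure {finRotate (n + 2), Equiv.swap 0 (finRotate (n + 2) 0)} := by
    rw [Equiv.Perm.closure_cycle_adjacent_swap isCycle_finRotate support_finRotate]
    exact Subgroup.mem_top π
  rw [finRotate_apply_zero] at hπ
  have := Subgroup.mem_map_of_mem freeGroupCongrHom hπ
  rwa [MonoidHom.map_closure, Set.image_pair] at this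

end Permutations

end FreeGroup

open FreeGroup

theorem Equiv.Perm.exists_apply_eq_and_apply_eq {α : Type*} [DecidableEq α] {a b i j : α}
    (hab : a ≠ b) (hij : i ≠ j) : ∃ π : Equiv.Perm α, π a = i ∧ π b = j := by
  refine ⟨Equiv.swap a i * Equiv.swap b (Equiv.swap a i j), ?_, by simp⟩
  rw [Equiv.Perm.mul_apply, Equiv.swap_apply_of_ne_of_ne hab, Equiv.swap_apply_left]
  rwa [Ne, eq_comm, Equiv.swap_apply_eq_iff, Equiv.swap_apply_left, eq_comm]

/-- For `n ≥ 3`, `Aut(F_n)` is generated by the four automorphisms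
`ρ₁₂ : x₁ ↦ x₁x₂`, `e₁ : x₁ ↦ x₁⁻¹`, the transposition `(x₁,x₂)`, and the cyclic
permutation `(x₁,x₂,…,x_n)` of the basis (indices mod `n`). -/
theorem aut_generated_by_four {n : ℕ} (hn : 3 ≤ n)
    (ρ e τ σ : MulAut (FreeGroup (Fin n)))
    (hρ : ∀ k : Fin n, ρ (FreeGroup.of k) =
      if k = ⟨0, by omega⟩ then
        FreeGroup.of (⟨0, by omega⟩ : Fin n) * FreeGroup.of (⟨1, by omega⟩ : Fin n)
      else FreeGroup.of k)
    (he : ∀ k : Fin n, e (FreeGroup.of k) =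
      if k = ⟨0, by omega⟩ then (FreeGroup.of (⟨0, by omega⟩ : Fin n))⁻¹ else FreeGroup.of k)
    (hτ : ∀ k : Fin n, τ (FreeGroup.of k) =
      if k = ⟨0, by omega⟩ then FreeGroup.of (⟨1, by omega⟩ : Fin n)
      else if k = ⟨1, by omega⟩ then FreeGroup.of (⟨0, by omega⟩ : Fin n)
      else FreeGroup.of k)
    (hσ : ∀ k : Fin n, σ (FreeGroup.of k) = FreeGroup.of (k + ⟨1, by omega⟩)) :
    Subgroup.closure {ρ, e, τ, σ} = (⊤ : Subgroup (MulAut (FreeGroup (Fin n)))) := by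
  obtain ⟨m, rfl⟩ : ∃ m, n = m + 3 := ⟨n - 3, by omega⟩
  have h0 : (⟨0, by omega⟩ : Fin (m + 3)) = 0 := rfl
  have h1 : (⟨1, by omega⟩ : Fin (m + 3)) = 1 := rfl
  simp only [h0, h1] at hρ he hτ hσ
  simp only [← Function.update_apply] at hρ he
  set N := Subgroup.closure {ρ, e, τ, σ}
  have hσ' : freeGroupCongr (finRotate (m + 3)) = σ :=
    mulAut_ext fun k => by simp [freeGroupCongr_apply, hσ]
  have hτ' : freeGroupCongr (Equiv.swap 0 1) = τ := mulAut_ext fun k => by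
    simp only [freeGroupCongr_apply, map.of, hτ, Equiv.swap_apply_def]
    split_ifs <;> simp_all
  have hperm (π : Equiv.Perm (Fin (m + 3))) : freeGroupCongr π ∈ N := by
    refine Subgroup.closure_mono ?_ (freeGroupCongr_mem_closure_finRotate_swap (n := m + 1) π)
    simp [hσ', hτ', Set.insert_subset_iff]
  refine eq_top_of_perm_inversion_transvection_mem hperm (fun i => ?_) (fun i j hij => ?_)
  · simpa using exists_mem_apply_of_eq_update_map hperm (Subgroup.subset_closure (by simp)) he
      (Equiv.swap 0 i)
  · obtain ⟨π, hπ0, hπ1⟩ := Equiv.Perm.exists_apply_eq_and_apply_eq zero_ne_one hij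
    simpa [hπ0, hπ1] using
      exists_mem_apply_of_eq_update_map hperm (Subgroup.subset_closure (by simp)) hρ π
end
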